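/- arXiv:1909.11564 — 6 statements merged into one kernel-verified Lean document; each statement's English description precedes it below -/
import Mathlib

section
/- For every real x > 1/2, the digamma function satisfies ln(x - 1/2) < ψ(x) < ln(x). -/
/-!
`log ∘ Γ` is convex on `(0, ∞)` with `log Γ (x + 1) - log Γ x = log x`, so comparing its derivative
with this slope gives `ψ x ≤ log x ≤ ψ (x + 1)`; with `ψ (x + 1) = ψ x + 1/x` and
`log (1 + 1/x) < 1/x` the upper bound becomes strict. For the lower bound, `ψ x - log (x - 1/2)`
strictly decreases under `x ↦ x + 1` because `1/x < log ((x + 1/2) / (x - 1/2))`, and it is bounded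
below by `log (x - 1) - log (x - 1/2) → 0`; hence it is positive.
-/

noncomputable def digamma (x : ℝ) : ℝ := deriv (fun y => Real.log (Real.Gamma y)) x

open Real Set Filter Topology

lemma differentiableAt_log_Gamma {x : ℝ} (hx : 0 < x) :
    DifferentiableAt ℝ (fun y => log (Gamma y)) x :=
  (differentiableOn_Gamma_Ioi.differentiableAt (Ioi_mem_nhds hx)).log (Gamma_pos_of_pos hx).ne'

lemma log_Gamma_add_one {x : ℝ} (hx : 0 < x) : log (Gamma (x + 1)) = log x + log (Gamma x) := by
  rw [Gamma_add_one hx.ne', log_mul hx.ne' (Gamma_pos_of_pos hx).ne']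

lemma digamma_add_one {x : ℝ} (hx : 0 < x) : digamma (x + 1) = digamma x + x⁻¹ := by
  have hfun : (fun y => log (Gamma (y + 1))) =ᶠ[𝓝 x] fun y => log y + log (Gamma y) :=
    (eventually_gt_nhds hx).mono fun y hy => log_Gamma_add_one hy
  have hderiv := hfun.deriv_eq
  rw [deriv_comp_add_const (f := fun z => log (Gamma z)),
    deriv_fun_add (differentiableAt_log hx.ne') (differentiableAt_log_Gamma hx), deriv_log]
    at hderiv
  rw [digamma, hderiv, digamma, add_comm]

lemma slope_log_Gamma {x : ℝ} (hx : 0 < x) : slope (log ∘ Gamma) x (x + 1) = log x := by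
  simp [slope_def_field, log_Gamma_add_one hx]

lemma digamma_le_log {x : ℝ} (hx : 0 < x) : digamma x ≤ log x :=
  slope_log_Gamma hx ▸ convexOn_log_Gamma.deriv_le_slope hx (by simp; linarith) (lt_add_one x)
    (differentiableAt_log_Gamma hx)

lemma log_le_digamma_add_one {x : ℝ} (hx : 0 < x) : log x ≤ digamma (x + 1) :=
  slope_log_Gamma hx ▸ convexOn_log_Gamma.slope_le_deriv hx (by simp; linarith) (lt_add_one x)
    (differentiableAt_log_Gamma (by linarith))

lemma log_add_one_sub_log {x : ℝ} (hx : 0 < x) : log (x + 1) - log x = log (1 + x⁻¹) := by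
  rw [← log_div (by linarith) hx.ne', add_div, div_self hx.ne', one_div x]

lemma log_add_one_sub_log_lt_inv {x : ℝ} (hx : 0 < x) : log (x + 1) - log x < x⁻¹ := by
  rw [log_add_one_sub_log hx]
  simpa using log_lt_sub_one_of_pos (by positivity : 0 < 1 + x⁻¹) (by simp [hx.ne'])

-- In `log (1 + a⁻¹) = ∑ₖ 2 / ((2k + 1) (2a + 1) ^ (2k + 1))` the term `k = 0` is `(a + 1/2)⁻¹`.
lemma inv_add_half_lt_log_add_one_sub_log {a : ℝ} (ha : 0 < a) :
    (a + 1 / 2)⁻¹ < log (a + 1) - log a := by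
  rw [log_add_one_sub_log ha]
  have hpartial :=
    sum_le_hasSum (Finset.range 2) (fun k _ => by positivity) (hasSum_log_one_add_inv ha)
  rw [Finset.sum_range_succ, Finset.sum_range_one] at hpartial
  have hfirst : 2 * (1 / (2 * ((0 : ℕ) : ℝ) + 1)) * (1 / (2 * a + 1)) ^ (2 * 0 + 1)
      = (a + 1 / 2)⁻¹ := by
    norm_num
    field_simp
  have hsecond : 0 < 2 * (1 / (2 * ((1 : ℕ) : ℝ) + 1)) * (1 / (2 * a + 1)) ^ (2 * 1 + 1) := by
    positivity
  linarith

lemma digamma_lt_log {x : ℝ} (hx : 0 < x) : digamma x < log x := by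
  linarith [digamma_le_log (by linarith : 0 < x + 1), digamma_add_one hx,
    log_add_one_sub_log_lt_inv hx]

lemma nonneg_of_add_one_le_of_le_of_tendsto {f g : ℝ → ℝ} {a x : ℝ}
    (hstep : ∀ y, a < y → f (y + 1) ≤ f y) (hle : ∀ y, a < y → g y ≤ f y)
    (hlim : Tendsto g atTop (𝓝 0)) (hx : a < x) : 0 ≤ f x := by
  have hshift (n : ℕ) : a < x + n := by linarith [n.cast_nonneg (α := ℝ)]
  have hiter (n : ℕ) : f (x + n) ≤ f x := by
    induction n with
    | zero => simp
    | succ n ih =>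
      rw [Nat.cast_succ, ← add_assoc]
      exact (hstep _ (hshift n)).trans ih
  exact le_of_tendsto'
    (hlim.comp (tendsto_atTop_add_const_left atTop x tendsto_natCast_atTop_atTop))
    fun n => (hle _ (hshift n)).trans (hiter n)

lemma log_sub_half_lt_digamma {x : ℝ} (hx : 1 / 2 < x) : log (x - 1 / 2) < digamma x := by
  have hdecr : ∀ y, 1 / 2 < y →
      digamma (y + 1) - log (y + 1 - 1 / 2) < digamma y - log (y - 1 / 2) := by
    intro y hy
    have hgap := inv_add_half_lt_log_add_one_sub_log (by linarith : 0 < y - 1 / 2)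
    rw [sub_add_cancel, show y - 1 / 2 + 1 = y + 1 - 1 / 2 by ring] at hgap
    linarith [digamma_add_one (by linarith : 0 < y)]
  have hminorant :
      ∀ y, 1 < y → log (y - 1) - log (y - 1 / 2) ≤ digamma y - log (y - 1 / 2) := by
    intro y hy
    have h := log_le_digamma_add_one (by linarith : 0 < y - 1)
    rw [sub_add_cancel] at h
    linarith
  have hlim : Tendsto (fun y => log (y - 1) - log (y - 1 / 2)) atTop (𝓝 0) := by
    refine ((tendsto_log_comp_add_sub_log (-1 / 2)).comp
      (tendsto_atTop_add_const_right atTop (-1 / 2) tendsto_id)).congr fun y => ?_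
    simp only [Function.comp_apply, id]
    ring_nf
  have hnonneg := nonneg_of_add_one_le_of_le_of_tendsto (fun y hy => (hdecr y (by linarith)).le)
    hminorant hlim (by linarith : 1 < x + 1)
  linarith [hdecr x hx]

theorem digamma_log_bounds (x : ℝ) (hx : 1/2 < x) :
    Real.log (x - 1/2) < digamma x ∧ digamma x < Real.log x :=
  ⟨log_sub_half_lt_digamma hx, digamma_lt_log (by linarith)⟩
end

section
/- Let p ∈ (0,1) and x > 0, and set A = exp(H_p(x) - γ), where H_p(x) = ∫_0^1 (1 - (1-p+pt)^x)/(1-t) dt. Then A/p - 1/2 ≥ x ≥ A - 1. -/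
/-!
Substituting `u = 1 - p + p t` gives `H_p(x) = ∫_{1-p}^1 (1 - u^x)/(1 - u) du`. On `[0, 1 - p]`
the integrand lies between `0` and `1/(1 - u)`, whose integral is `-log p`, so
`H(x) + log p ≤ H_p(x) ≤ H(x)` for the harmonic number function `H = H_1`. Expanding `1/(1 - u)`
geometrically, `H(x) = ∑_k (1/(k+1) - 1/(x+k+1))`, hence
`H(x) - γ = lim (log (n+1) - ∑_{k<n} 1/(x+k+1))`. The bounds
`log (t+1) - log t ≤ 1/t ≤ log (t+1/2) - log (t-1/2)` telescope to
`γ + log (x + 1/2) ≤ H(x) ≤ γ + log (x + 1)`; exponentiating gives the claim.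
-/

noncomputable def Hp (p x : ℝ) : ℝ := ∫ t in (0:ℝ)..1, (1 - (1 - p + p * t) ^ x) / (1 - t)

open Real Filter Topology MeasureTheory intervalIntegral Finset

noncomputable def harmonicIntegrand (x u : ℝ) : ℝ := (1 - u ^ x) / (1 - u)

noncomputable def harmonicIntegral (x : ℝ) : ℝ := ∫ u in (0:ℝ)..1, harmonicIntegrand x u

section Integrand

variable {x u : ℝ}

lemma harmonicIntegrand_nonneg (hx : 0 ≤ x) (hu0 : 0 ≤ u) (hu1 : u ≤ 1) :
    0 ≤ harmonicIntegrand x u :=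
  div_nonneg (sub_nonneg.2 (rpow_le_one hu0 hu1 hx)) (sub_nonneg.2 hu1)

lemma harmonicIntegrand_le_max (hx : 0 ≤ x) (hu0 : 0 ≤ u) (hu1 : u ≤ 1) :
    harmonicIntegrand x u ≤ max 1 x := by
  rcases hu1.eq_or_lt with rfl | hu1
  · simp [harmonicIntegrand]
  rw [harmonicIntegrand, div_le_iff₀ (sub_pos.2 hu1)]
  rcases le_total x 1 with hx1 | hx1
  · have hu : u ≤ u ^ x := by
      simpa using rpow_le_rpow_of_exponent_ge' hu0 hu1.le hx hx1
    nlinarith [le_max_left 1 x]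
  · have hbernoulli := one_add_mul_self_le_rpow_one_add (by linarith : -1 ≤ u - 1) hx1
    rw [add_sub_cancel] at hbernoulli
    nlinarith [le_max_right 1 x]

lemma harmonicIntegrand_le_inv_one_sub (hu0 : 0 ≤ u) (hu1 : u ≤ 1) :
    harmonicIntegrand x u ≤ (1 - u)⁻¹ := by
  rw [harmonicIntegrand, inv_eq_one_div]
  gcongr
  linarith [rpow_nonneg hu0 x]

lemma measurable_harmonicIntegrand (x : ℝ) : Measurable (harmonicIntegrand x) := by
  unfold harmonicIntegrand
  fun_prop

lemma intervalIntegrable_harmonicIntegrand (hx : 0 ≤ x) :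
    IntervalIntegrable (harmonicIntegrand x) volume 0 1 := by
  refine IntervalIntegrable.mono_fun' (g := fun _ => max 1 x) intervalIntegrable_const
    (measurable_harmonicIntegrand x).aestronglyMeasurable ?_
  rw [EventuallyLE, ae_restrict_iff' measurableSet_uIoc]
  refine .of_forall fun u hu => ?_
  rw [Set.uIoc_of_le zero_le_one] at hu
  rw [norm_of_nonneg (harmonicIntegrand_nonneg hx hu.1.le hu.2)]
  exact harmonicIntegrand_le_max hx hu.1.le hu.2

lemma intervalIntegrable_harmonicIntegrand_of_mem_Icc (hx : 0 ≤ x) {a b : ℝ}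
    (ha : a ∈ Set.Icc (0:ℝ) 1) (hb : b ∈ Set.Icc (0:ℝ) 1) :
    IntervalIntegrable (harmonicIntegrand x) volume a b := by
  rw [← Set.uIcc_of_le zero_le_one] at ha hb
  exact (intervalIntegrable_harmonicIntegrand hx).mono_set (Set.uIcc_subset_uIcc ha hb)

lemma harmonicIntegrand_eq_sum_add (x u : ℝ) (n : ℕ) :
    harmonicIntegrand x u =
      ∑ k ∈ range n, (u ^ k - u ^ x * u ^ k) + u ^ n * harmonicIntegrand x u := by
  rcases eq_or_ne u 1 with rfl | hu
  · simp [harmonicIntegrand]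
  have hsum : ∑ k ∈ range n, (u ^ k - u ^ x * u ^ k) = (1 - u ^ x) * ∑ k ∈ range n, u ^ k := by
    rw [mul_sum]
    exact sum_congr rfl fun k _ => by ring
  have h1u : 1 - u ≠ 0 := sub_ne_zero.2 hu.symm
  rw [hsum, geom_sum_eq hu, harmonicIntegrand]
  field_simp
  ring

end Integrand

lemma integral_pow_sub_rpow_mul_pow {x : ℝ} (hx : 0 < x) (k : ℕ) :
    ∫ u in (0:ℝ)..1, (u ^ k - u ^ x * u ^ k) = (k + 1 : ℝ)⁻¹ - (x + k + 1)⁻¹ := by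
  have hxk : 0 < x + k := by positivity
  have hcont : Continuous fun u : ℝ => u ^ x * u ^ k :=
    (continuous_rpow_const hx.le).mul (continuous_pow k)
  have hmul : ∀ u ∈ Set.uIcc (0:ℝ) 1, u ^ x * u ^ k = u ^ (x + k) := fun u hu => by
    rw [Set.uIcc_of_le zero_le_one] at hu
    rw [rpow_add' hu.1 hxk.ne', rpow_natCast]
  rw [intervalIntegral.integral_sub (intervalIntegrable_pow k) (hcont.intervalIntegrable 0 1),
    integral_pow, integral_congr hmul, integral_rpow (Or.inl (by linarith))]
  simp [add_assoc, zero_rpow (by positivity : x + (k + 1) ≠ 0)]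

section HarmonicIntegral

variable {x : ℝ}

lemma harmonicIntegral_eq_sum_add (hx : 0 < x) (n : ℕ) :
    harmonicIntegral x = ∑ k ∈ range n, ((k + 1 : ℝ)⁻¹ - (x + k + 1)⁻¹) +
      ∫ u in (0:ℝ)..1, u ^ n * harmonicIntegrand x u := by
  have hterm : ∀ k ∈ range n,
      IntervalIntegrable (fun u : ℝ => u ^ k - u ^ x * u ^ k) volume 0 1 := fun k _ =>
    ((continuous_pow k).sub
      ((continuous_rpow_const hx.le).mul (continuous_pow k))).intervalIntegrable 0 1
  have hrem : IntervalIntegrable (fun u => u ^ n * harmonicIntegrand x u) volume 0 1 :=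
    (intervalIntegrable_harmonicIntegrand hx.le).continuousOn_mul (continuous_pow n).continuousOn
  unfold harmonicIntegral
  rw [integral_congr fun u _ => harmonicIntegrand_eq_sum_add x u n,
    integral_add (by simpa only [sum_fn] using IntervalIntegrable.sum _ hterm) hrem,
    integral_finsetSum hterm]
  simp only [integral_pow_sub_rpow_mul_pow hx]

lemma tendsto_integral_pow_mul_harmonicIntegrand (hx : 0 ≤ x) :
    Tendsto (fun n : ℕ => ∫ u in (0:ℝ)..1, u ^ n * harmonicIntegrand x u) atTop (𝓝 0) := by
  have hle : ∀ n : ℕ,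
      ∫ u in (0:ℝ)..1, u ^ n * harmonicIntegrand x u ≤ max 1 x * (1 / (n + 1)) := by
    intro n
    calc ∫ u in (0:ℝ)..1, u ^ n * harmonicIntegrand x u
        ≤ ∫ u in (0:ℝ)..1, u ^ n * max 1 x := by
          refine integral_mono_on zero_le_one
            ((intervalIntegrable_harmonicIntegrand hx).continuousOn_mul
              (continuous_pow n).continuousOn)
            ((intervalIntegrable_pow n).mul_const _) fun u hu => ?_
          exact mul_le_mul_of_nonneg_left (harmonicIntegrand_le_max hx hu.1 hu.2)
            (pow_nonneg hu.1 n)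
      _ = max 1 x * (1 / (n + 1)) := by
          rw [intervalIntegral.integral_mul_const, integral_pow]
          simp [mul_comm]
  refine squeeze_zero (fun n => integral_nonneg zero_le_one fun u hu =>
    mul_nonneg (pow_nonneg hu.1 n) (harmonicIntegrand_nonneg hx hu.1 hu.2)) hle ?_
  simpa using tendsto_one_div_add_atTop_nhds_zero_nat.const_mul (max 1 x)

lemma tendsto_log_sub_sum_inv (hx : 0 < x) :
    Tendsto (fun n : ℕ => log (n + 1) - ∑ k ∈ range n, (x + k + 1)⁻¹) atTop
      (𝓝 (harmonicIntegral x - eulerMascheroniConstant)) := by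
  have hpartial : Tendsto (fun n : ℕ => ∑ k ∈ range n, ((k + 1 : ℝ)⁻¹ - (x + k + 1)⁻¹)) atTop
      (𝓝 (harmonicIntegral x)) := by
    have := tendsto_const_nhds (x := harmonicIntegral x) |>.sub
      (tendsto_integral_pow_mul_harmonicIntegrand hx.le)
    rw [sub_zero] at this
    refine this.congr fun n => ?_
    rw [harmonicIntegral_eq_sum_add hx n, add_sub_cancel_right]
  refine (hpartial.sub tendsto_harmonic_sub_log_add_one).congr fun n => ?_
  simp only [sum_sub_distrib, harmonic]
  push_cast
  ring

end HarmonicIntegral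

lemma log_add_one_sub_log_le_inv {t : ℝ} (ht : 0 < t) : log (t + 1) - log t ≤ t⁻¹ := by
  have h := log_le_sub_one_of_pos (by positivity : 0 < (t + 1) / t)
  rwa [log_div (by positivity) ht.ne', add_div, div_self ht.ne', one_div,
    add_sub_cancel_left] at h

lemma inv_le_log_add_half_sub_log_sub_half {t : ℝ} (ht : 1 / 2 < t) :
    t⁻¹ ≤ log (t + 1 / 2) - log (t - 1 / 2) := by
  have ha : 0 < t - 1 / 2 := by linarith
  have ht0 : t ≠ 0 := by linarith
  calc t⁻¹ = 2 * (1 / (2 * ((0 : ℕ) : ℝ) + 1)) * (1 / (2 * (t - 1 / 2) + 1)) ^ (2 * 0 + 1) := by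
        rw [show 2 * (t - 1 / 2) + 1 = 2 * t by ring]
        norm_num
        field_simp
    _ ≤ log (1 + (t - 1 / 2)⁻¹) :=
        le_hasSum (hasSum_log_one_add_inv ha) 0 fun k _ => by positivity
    _ = log (t + 1 / 2) - log (t - 1 / 2) := by
        rw [← log_div (by linarith) ha.ne', show t + 1 / 2 = t - 1 / 2 + 1 by ring, add_div,
          div_self ha.ne', inv_eq_one_div (t - 1 / 2)]

lemma log_sub_log_le_sum_inv {x : ℝ} (hx : -1 < x) (n : ℕ) :
    log (x + n + 1) - log (x + 1) ≤ ∑ k ∈ range n, (x + k + 1)⁻¹ := by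
  have htel := sum_range_sub (fun k : ℕ => log (x + k + 1)) n
  simp only [Nat.cast_zero, add_zero, Nat.cast_succ] at htel
  rw [← htel]
  refine sum_le_sum fun k _ => ?_
  rw [show x + (k + 1) + 1 = x + k + 1 + 1 by ring]
  exact log_add_one_sub_log_le_inv (by linarith [k.cast_nonneg (α := ℝ)])

lemma sum_inv_le_log_sub_log {x : ℝ} (hx : -1 / 2 < x) (n : ℕ) :
    ∑ k ∈ range n, (x + k + 1)⁻¹ ≤ log (x + n + 1 / 2) - log (x + 1 / 2) := by
  have htel := sum_range_sub (fun k : ℕ => log (x + k + 1 / 2)) n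
  simp only [Nat.cast_zero, add_zero, Nat.cast_succ] at htel
  rw [← htel]
  refine sum_le_sum fun k _ => ?_
  rw [show x + (k + 1) + 1 / 2 = x + k + 1 + 1 / 2 by ring,
    show x + k + 1 / 2 = x + k + 1 - 1 / 2 by ring]
  exact inv_le_log_add_half_sub_log_sub_half (by linarith [k.cast_nonneg (α := ℝ)])

section HarmonicBounds

variable {x : ℝ}

lemma harmonicIntegral_le (hx : 0 < x) :
    harmonicIntegral x ≤ eulerMascheroniConstant + log (x + 1) := by
  suffices harmonicIntegral x - eulerMascheroniConstant ≤ log (x + 1) by linarith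
  refine le_of_tendsto' (tendsto_log_sub_sum_inv hx) fun n => ?_
  have htel := log_sub_log_le_sum_inv (by linarith : -1 < x) n
  have hmono : log (n + 1) ≤ log (x + n + 1) := log_le_log (by positivity) (by linarith)
  linarith

lemma le_harmonicIntegral (hx : 0 < x) :
    eulerMascheroniConstant + log (x + 1 / 2) ≤ harmonicIntegral x := by
  have hshift : Tendsto (fun n : ℕ => log (x + n + 1 / 2) - log (n + 1)) atTop (𝓝 0) := by
    refine ((tendsto_log_comp_add_sub_log (x - 1 / 2)).comp
      (tendsto_atTop_add_const_right _ 1 tendsto_natCast_atTop_atTop)).congr fun n => ?_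
    simp only [Function.comp_apply]
    rw [show (n : ℝ) + 1 + (x - 1 / 2) = x + n + 1 / 2 by ring]
  have hlim := (tendsto_log_sub_sum_inv hx).add hshift
  rw [add_zero] at hlim
  suffices log (x + 1 / 2) ≤ harmonicIntegral x - eulerMascheroniConstant by linarith
  refine ge_of_tendsto' hlim fun n => ?_
  have htel := sum_inv_le_log_sub_log (by linarith : -1 / 2 < x) n
  linarith

end HarmonicBounds

lemma Hp_eq_integral_harmonicIntegrand (p x : ℝ) :
    Hp p x = ∫ u in (1 - p)..1, harmonicIntegrand x u := by
  have hsubst : ∀ t, (1 - (1 - p + p * t) ^ x) / (1 - t) =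
      p * harmonicIntegrand x (p * t + (1 - p)) := by
    intro t
    rcases eq_or_ne t 1 with rfl | ht
    · simp [harmonicIntegrand]
    rcases eq_or_ne p 0 with rfl | hp
    · simp
    have h1t : 1 - t ≠ 0 := sub_ne_zero.2 ht.symm
    rw [harmonicIntegrand, show 1 - (p * t + (1 - p)) = p * (1 - t) by ring,
      show p * t + (1 - p) = 1 - p + p * t by ring]
    field_simp
  rw [Hp, integral_congr fun t _ => hsubst t, intervalIntegral.integral_const_mul,
    mul_integral_comp_mul_add]
  simp

section Hp

variable {p x : ℝ}

lemma Hp_eq_harmonicIntegral_sub (hx : 0 ≤ x) (hp0 : 0 ≤ p) (hp1 : p ≤ 1) :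
    Hp p x = harmonicIntegral x - ∫ u in (0:ℝ)..(1 - p), harmonicIntegrand x u := by
  have hmid : 1 - p ∈ Set.Icc (0:ℝ) 1 := ⟨by linarith, by linarith⟩
  rw [Hp_eq_integral_harmonicIntegrand, harmonicIntegral, ← integral_add_adjacent_intervals
    (intervalIntegrable_harmonicIntegrand_of_mem_Icc hx (Set.left_mem_Icc.2 zero_le_one) hmid)
    (intervalIntegrable_harmonicIntegrand_of_mem_Icc hx hmid (Set.right_mem_Icc.2 zero_le_one))]
  ring

lemma Hp_le_harmonicIntegral (hx : 0 ≤ x) (hp0 : 0 ≤ p) (hp1 : p ≤ 1) :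
    Hp p x ≤ harmonicIntegral x := by
  rw [Hp_eq_harmonicIntegral_sub hx hp0 hp1, sub_le_self_iff]
  exact integral_nonneg (by linarith) fun u hu =>
    harmonicIntegrand_nonneg hx hu.1 (by linarith [hu.2])

lemma harmonicIntegral_add_log_le_Hp (hx : 0 ≤ x) (hp0 : 0 < p) (hp1 : p ≤ 1) :
    harmonicIntegral x + log p ≤ Hp p x := by
  have h1p : 0 ≤ 1 - p := by linarith
  have hlog : ∫ u in (0:ℝ)..(1 - p), (1 - u)⁻¹ = -log p := by
    rw [integral_comp_sub_left (fun u => u⁻¹) 1, sub_sub_cancel, sub_zero,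
      integral_inv_of_pos hp0 one_pos, log_div one_ne_zero hp0.ne', log_one, zero_sub]
  have hle : ∫ u in (0:ℝ)..(1 - p), harmonicIntegrand x u ≤ -log p := by
    rw [← hlog]
    refine integral_mono_on h1p (intervalIntegrable_harmonicIntegrand_of_mem_Icc hx
      (Set.left_mem_Icc.2 zero_le_one) ⟨h1p, by linarith⟩) ?_ fun u hu =>
        harmonicIntegrand_le_inv_one_sub hu.1 (by linarith [hu.2])
    refine (ContinuousOn.inv₀ (by fun_prop) fun u hu => ?_).intervalIntegrable
    rw [Set.uIcc_of_le h1p] at hu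
    linarith [hu.2]
  rw [Hp_eq_harmonicIntegral_sub hx hp0.le hp1]
  linarith

end Hp

theorem Hp_inverse_bounds (p x : ℝ) (hp : p ∈ Set.Ioo (0:ℝ) 1) (hx : 0 < x) :
    letI A := Real.exp (Hp p x - Real.eulerMascheroniConstant)
    A - 1 ≤ x ∧ x ≤ A / p - 1/2 := by
  obtain ⟨hp0, hp1⟩ := hp
  have hupper : Hp p x - eulerMascheroniConstant ≤ log (x + 1) := by
    linarith [Hp_le_harmonicIntegral hx.le hp0.le hp1.le, harmonicIntegral_le hx]
  have hlower : log (p * (x + 1 / 2)) ≤ Hp p x - eulerMascheroniConstant := by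
    rw [log_mul hp0.ne' (by positivity)]
    linarith [harmonicIntegral_add_log_le_Hp hx.le hp0 hp1.le, le_harmonicIntegral hx]
  have hexp_upper := exp_le_exp.2 hupper
  have hexp_lower := exp_le_exp.2 hlower
  rw [exp_log (by positivity)] at hexp_upper hexp_lower
  refine ⟨by linarith, ?_⟩
  rw [le_sub_iff_add_le, le_div_iff₀ hp0]
  linarith
end

section
/- Let M be a binomial random variable with F_0 trials and success probability p ∈ (0,1], and let H denote the harmonic number function extended by H(0) = 0. Then E[H(M)] = ∫_0^1 (1 - (1-p+pt)^{F_0})/(1-t) dt, i.e., the expected harmonic number of a binomial equals the p-modified harmonic function H_p(F_0). -/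
theorem expected_harmonic_binomial (F₀ : ℕ) (p : ℝ) (hp : p ∈ Set.Ioc (0:ℝ) 1) :
    (∑ m ∈ Finset.range (F₀ + 1),
        (∑ j ∈ Finset.range m, (1 : ℝ) / (j + 1)) *
          ((F₀.choose m : ℝ) * p ^ m * (1 - p) ^ (F₀ - m))) =
      ∫ t in (0:ℝ)..1, (1 - (1 - p + p * t) ^ (F₀ : ℕ)) / (1 - t) := by
  set n := F₀ with hn
  set w : ℕ → ℝ := fun m => (n.choose m : ℝ) * p ^ m * (1 - p) ^ (n - m) with hw
  have hptw : ∀ t : ℝ, t ≠ 1 →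
      (1 - (1 - p + p * t) ^ n) / (1 - t)
        = ∑ m ∈ Finset.range (n+1), w m * ∑ j ∈ Finset.range m, t ^ j := by
    intro t ht
    have ht' : (1:ℝ) - t ≠ 0 := sub_ne_zero.mpr (Ne.symm ht)
    rw [div_eq_iff ht']
    have expand : (1 - p + p * t) ^ n
        = ∑ m ∈ Finset.range (n+1), w m * t ^ m := by
      have h := add_pow (p*t) (1-p) n
      rw [show (1 : ℝ) - p + p * t = p * t + (1 - p) by ring, h]
      refine Finset.sum_congr rfl fun m _ => ?_
      simp only [hw, mul_pow]
      ring
    have hone : (1:ℝ) = ∑ m ∈ Finset.range (n+1), w m := by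
      have h := add_pow p (1-p) n
      rw [show p + (1 - p) = (1:ℝ) by ring, one_pow] at h
      rw [h]
      exact Finset.sum_congr rfl fun m _ => by simp [hw]; ring
    have geom : ∀ m : ℕ, (∑ j ∈ Finset.range m, t ^ j) * (1 - t) = 1 - t ^ m := by
      intro m
      have := geom_sum_mul t m
      nlinarith [this]
    calc 1 - (1 - p + p * t) ^ n
        = (∑ m ∈ Finset.range (n+1), w m) - ∑ m ∈ Finset.range (n+1), w m * t ^ m := by
          rw [expand, ← hone]
      _ = ∑ m ∈ Finset.range (n+1), w m * (1 - t ^ m) := by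
          rw [← Finset.sum_sub_distrib]
          exact Finset.sum_congr rfl fun m _ => by ring
      _ = ∑ m ∈ Finset.range (n+1), w m * ((∑ j ∈ Finset.range m, t ^ j) * (1 - t)) := by
          exact Finset.sum_congr rfl fun m _ => by rw [geom m]
      _ = (∑ m ∈ Finset.range (n+1), w m * ∑ j ∈ Finset.range m, t ^ j) * (1 - t) := by
          rw [Finset.sum_mul]
          exact Finset.sum_congr rfl fun m _ => by ring
  have hcongr : (∫ t in (0:ℝ)..1, (1 - (1 - p + p * t) ^ n) / (1 - t))
      = ∫ t in (0:ℝ)..1, ∑ m ∈ Finset.range (n+1), w m * ∑ j ∈ Finset.range m, t ^ j := by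
    apply intervalIntegral.integral_congr_ae
    have hne : ∀ᵐ t : ℝ, t ≠ (1:ℝ) := by
      rw [MeasureTheory.ae_iff]
      convert Real.volume_singleton (a := (1:ℝ)) using 2
      ext x; simp
    filter_upwards [hne] with t ht _
    exact hptw t ht
  rw [hcongr, intervalIntegral.integral_finset_sum]
  · refine Finset.sum_congr rfl fun m _ => ?_
    rw [intervalIntegral.integral_const_mul, intervalIntegral.integral_finset_sum]
    · rw [mul_comm]
      congr 1
      refine Finset.sum_congr rfl fun j _ => ?_
      rw [integral_pow]
      simp
    · intro j _
      exact (continuous_pow j).intervalIntegrable 0 1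
  · intro m _
    exact (Continuous.mul continuous_const
      (continuous_finset_sum _ fun j _ => continuous_pow j)).intervalIntegrable 0 1
end

section
/- Let t ∈ (0,1). Then ln(sin(πt)/(πt)) < ln(1 - t²) + t²(1 - π²/6). -/
open Real Filter Topology

/-!
Taking logarithms in Euler's product `sin (π t) / (π t) = ∏_{n ≥ 1} (1 - t² / n²)` gives
`log (sin (π t) / (π t)) = log (1 - t²) + ∑_{n ≥ 2} log (1 - t² / n²)`. Each term of the remaining
series is strictly below `-t² / n²` since `log (1 - y) < -y`, and `∑_{n ≥ 2} 1 / n² = π² / 6 - 1`.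
-/

namespace Real

lemma log_one_sub_le_neg {y : ℝ} (hy : y < 1) : log (1 - y) ≤ -y := by
  linarith [log_le_sub_one_of_pos (sub_pos.mpr hy)]

lemma log_one_sub_lt_neg {y : ℝ} (hy0 : 0 < y) (hy1 : y < 1) : log (1 - y) < -y := by
  linarith [log_lt_sub_one_of_pos (sub_pos.mpr hy1) (by linarith : 1 - y ≠ 1)]

lemma one_sub_sq_div_sq_ne_zero {x : ℝ} (hx : ∀ n : ℤ, x ≠ n) (j : ℕ) :
    1 - x ^ 2 / ((j : ℝ) + 1) ^ 2 ≠ 0 := by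
  have hj : ((j : ℝ) + 1) ^ 2 ≠ 0 := by positivity
  rw [sub_ne_zero, ne_comm, Ne, div_eq_one_iff_eq hj, sq_eq_sq_iff_eq_or_eq_neg, not_or]
  exact ⟨by exact_mod_cast hx (j + 1), by exact_mod_cast hx (-(j + 1))⟩

lemma sin_pi_mul_div_pi_mul_ne_zero {x : ℝ} (hx : ∀ n : ℤ, x ≠ n) : sin (π * x) / (π * x) ≠ 0 := by
  refine div_ne_zero (fun h => ?_) (mul_ne_zero pi_ne_zero (by exact_mod_cast hx 0))
  obtain ⟨n, hn⟩ := sin_eq_zero_iff.mp h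
  exact hx n (mul_left_cancel₀ pi_ne_zero (by linarith))

lemma tendsto_prod_one_sub_sq_div_sq {x : ℝ} (hx : x ≠ 0) :
    Tendsto (fun n : ℕ => ∏ j ∈ Finset.range n, (1 - x ^ 2 / ((j : ℝ) + 1) ^ 2)) atTop
      (𝓝 (sin (π * x) / (π * x))) := by
  have hπx : π * x ≠ 0 := mul_ne_zero pi_ne_zero hx
  simpa [mul_div_cancel_left₀ _ hπx] using (tendsto_euler_sin_prod x).div_const (π * x)

theorem hasSum_log_one_sub_sq_div_sq {x : ℝ} (hx : ∀ n : ℤ, x ≠ n) :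
    HasSum (fun n : ℕ => log (1 - x ^ 2 / ((n : ℝ) + 1) ^ 2)) (log (sin (π * x) / (π * x))) := by
  have hsum : Summable (fun n : ℕ => log (1 - x ^ 2 / ((n : ℝ) + 1) ^ 2)) := by
    have hsq := (summable_nat_add_iff 1).mpr (summable_one_div_nat_pow.mpr one_lt_two)
    simpa [sub_eq_add_neg, div_eq_mul_inv] using
      summable_log_one_add_of_summable (hsq.mul_left (-x ^ 2))
  have hlim : Tendsto (fun n : ℕ => ∑ j ∈ Finset.range n, log (1 - x ^ 2 / ((j : ℝ) + 1) ^ 2))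
      atTop (𝓝 (log (sin (π * x) / (π * x)))) := by
    refine ((continuousAt_log (sin_pi_mul_div_pi_mul_ne_zero hx)).tendsto.comp
      (tendsto_prod_one_sub_sq_div_sq (by exact_mod_cast hx 0))).congr fun n => ?_
    rw [Function.comp_apply, log_prod fun j _ => one_sub_sq_div_sq_ne_zero hx j]
  rw [← tendsto_nhds_unique hsum.hasSum.tendsto_sum_nat hlim]
  exact hsum.hasSum

-- The `n = 0` term of `hasSum_zeta_two` is `1 / 0 ^ 2 = 0`.
lemma hasSum_one_div_add_two_sq : HasSum (fun n : ℕ => 1 / ((n : ℝ) + 2) ^ 2) (π ^ 2 / 6 - 1) := by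
  simpa [Finset.sum_range_succ, add_assoc, one_add_one_eq_two] using
    (hasSum_nat_add_iff' 2).mpr hasSum_zeta_two

end Real

theorem log_sinc_lt (t : ℝ) (ht : t ∈ Set.Ioo (0:ℝ) 1) :
    Real.log (Real.sin (Real.pi * t) / (Real.pi * t)) <
      Real.log (1 - t ^ 2) + t ^ 2 * (1 - Real.pi ^ 2 / 6) := by
  obtain ⟨ht0, ht1⟩ := ht
  have ht_int : ∀ n : ℤ, t ≠ n := by
    rintro n rfl
    have : (0 : ℤ) < n ∧ n < 1 := ⟨by exact_mod_cast ht0, by exact_mod_cast ht1⟩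
    omega
  have hlog : HasSum (fun n : ℕ => log (1 - t ^ 2 / ((n : ℝ) + 2) ^ 2))
      (log (sin (π * t) / (π * t)) - log (1 - t ^ 2)) := by
    simpa [add_assoc, one_add_one_eq_two] using
      (hasSum_nat_add_iff' 1).mpr (hasSum_log_one_sub_sq_div_sq ht_int)
  have hbasel : HasSum (fun n : ℕ => -(t ^ 2 / ((n : ℝ) + 2) ^ 2)) (t ^ 2 * (1 - π ^ 2 / 6)) := by
    rw [show t ^ 2 * (1 - π ^ 2 / 6) = -(t ^ 2 * (π ^ 2 / 6 - 1)) by ring]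
    simpa only [mul_one_div] using (hasSum_one_div_add_two_sq.mul_left (t ^ 2)).neg
  have hlt (n : ℕ) : t ^ 2 / ((n : ℝ) + 2) ^ 2 < 1 := by
    have := n.cast_nonneg (α := ℝ)
    rw [div_lt_one (by positivity)]; nlinarith
  have := hasSum_lt (i := 0) (fun n => log_one_sub_le_neg (hlt n))
    (log_one_sub_lt_neg (by positivity) (hlt 0)) hlog hbasel
  linarith
end

section
/- For t ∈ (0,1), 1 - πt·cot(πt) < 2t²/(1-t²) + 3t². -/
/-!
By the partial fraction expansion of the cotangent, `1 - πt cot(πt) = ∑_{k ≥ 1} 2t² / (k² - t²)`.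
The term `k = 1` is `2t²/(1 - t²)`, and for `k ≥ 2` we have `k² - t² > k² - 1 = (k - 1)(k + 1)`,
so the remaining terms sum to at most `t² ∑_{k ≥ 2} 2/((k - 1)(k + 1)) = 3t²/2`, a telescoping series.
-/

open Real Filter Topology

lemma hasSum_sub_succ_of_antitone {f : ℕ → ℝ} (hf : Antitone f)
    (hlim : Tendsto f atTop (𝓝 0)) : HasSum (fun n ↦ f n - f (n + 1)) (f 0) := by
  rw [hasSum_iff_tendsto_nat_of_nonneg fun n ↦ sub_nonneg.2 (hf n.le_succ)]
  simp_rw [Finset.sum_range_sub']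
  simpa using tendsto_const_nhds.sub hlim

lemma hasSum_two_div_add_one_mul_add_three :
    HasSum (fun n : ℕ ↦ (2 : ℝ) / ((n + 1) * (n + 3))) (3 / 2) := by
  set f : ℕ → ℝ := fun n ↦ 1 / ((n : ℝ) + 1)
  have hf : Antitone f := fun m n hmn ↦
    one_div_le_one_div_of_le (by positivity) (by gcongr)
  have hlim : Tendsto f atTop (𝓝 0) := tendsto_one_div_add_atTop_nhds_zero_nat
  have hsum := (hasSum_sub_succ_of_antitone hf hlim).add
    (hasSum_sub_succ_of_antitone (hf.comp_monotone (Monotone.add_const monotone_id 1))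
      (hlim.comp (tendsto_add_atTop_nat 1)))
  convert hsum using 1
  · ext n
    simp only [f, Function.comp, id, Nat.cast_add, Nat.cast_one]
    field_simp
    ring
  · norm_num [f]

lemma Real.hasSum_pi_mul_cot_pi_mul_sub_inv {t : ℝ} (ht : ∀ n : ℤ, (n : ℝ) ≠ t) :
    HasSum (fun n : ℕ ↦ 2 * t / (t ^ 2 - (n + 1) ^ 2)) (π * cot (π * t) - 1 / t) := by
  have hz : (t : ℂ) ∈ Complex.integerComplement := fun ⟨n, hn⟩ ↦ ht n (by exact_mod_cast hn)
  have hsum := (summable_cotTerm hz).hasSum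
  rw [← cot_series_rep' hz] at hsum
  rw [← Complex.hasSum_ofReal]
  push_cast
  convert hsum using 2 with n
  rw [cotTerm_identity hz]
  ring

lemma Real.hasSum_one_sub_mul_cot {t : ℝ} (ht : ∀ n : ℤ, (n : ℝ) ≠ t) :
    HasSum (fun n : ℕ ↦ 2 * t ^ 2 / ((n + 1) ^ 2 - t ^ 2)) (1 - π * t * cot (π * t)) := by
  have ht0 : t ≠ 0 := by simpa using (ht 0).symm
  have h := (hasSum_pi_mul_cot_pi_mul_sub_inv ht).mul_left (-t)
  rw [show -t * (π * cot (π * t) - 1 / t) = 1 - π * t * cot (π * t) by field_simp; ring] at h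
  refine h.congr_fun fun n ↦ ?_
  rw [← neg_sub, div_neg]
  ring

lemma Real.one_sub_mul_cot_le {t : ℝ} (ht : t ∈ Set.Ioo (0 : ℝ) 1) :
    1 - π * t * cot (π * t) ≤ 2 * t ^ 2 / (1 - t ^ 2) + 3 / 2 * t ^ 2 := by
  obtain ⟨ht0, ht1⟩ := ht
  have hnotint : ∀ n : ℤ, (n : ℝ) ≠ t := fun n hn ↦ by
    have h0 : (0 : ℤ) < n := by exact_mod_cast hn ▸ ht0
    have h1 : n < 1 := by exact_mod_cast hn ▸ ht1
    omega
  have htail : ∀ n : ℕ, 2 * t ^ 2 / ((((n + 1 : ℕ) : ℝ) + 1) ^ 2 - t ^ 2)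
      ≤ t ^ 2 * (2 / ((n + 1) * (n + 3))) := fun n ↦ by
    rw [mul_div_assoc', mul_comm (t ^ 2)]
    gcongr
    push_cast
    nlinarith
  have hsum := (hasSum_nat_add_iff' 1).2 (hasSum_one_sub_mul_cot hnotint)
  have := hasSum_le htail hsum (hasSum_two_div_add_one_mul_add_three.mul_left (t ^ 2))
  norm_num at this
  linarith

theorem one_sub_pit_cot_lt (t : ℝ) (ht : t ∈ Set.Ioo (0:ℝ) 1) :
    1 - Real.pi * t * Real.cot (Real.pi * t) < 2 * t ^ 2 / (1 - t ^ 2) + 3 * t ^ 2 := by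
  linarith [one_sub_mul_cot_le ht, pow_pos ht.1 2]
end

section
/- Fix x > 0 and suppose y = max_{t∈(0,∞)} [(x-γ)t - ln Γ(1+t)]. Then y > (3/(2π²))·x², hence x < π·√(2y/3). -/
/-!
Euler's limit formula writes `log Γ(1 + t)` as the limit of
`(1 + t) log n + log n! - ∑_{m ≤ n} log (1 + t + m)`. Splitting
`log (1 + t + m) = log (m + 1) + log (1 + t / (m + 1))` and using
`log (1 + u) ≥ u - u² / 2` for `u ≥ 0`, the harmonic numbers produce `-γ t` and the squares
are controlled by `ζ(2) = π² / 6`, so `log Γ(1 + t) ≤ -γ t + π² t² / 12` for `t ≥ 0`.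
Evaluating the objective at `t₀ = 6 x / π²` then gives `y ≥ 3 x² / π² > 3 x² / (2 π²)`.
-/

open Real Finset Nat

namespace Real

lemma sub_sq_div_two_le_log_one_add {u : ℝ} (hu : 0 ≤ u) : u - u ^ 2 / 2 ≤ log (1 + u) := by
  let f : ℝ → ℝ := fun w => log (1 + w) - w + w ^ 2 / 2
  have hf : ∀ w, 0 ≤ w → HasDerivAt f (w ^ 2 / (1 + w)) w := by
    intro w hw
    have hw1 : 1 + w ≠ 0 := by positivity
    refine ((((hasDerivAt_id w).const_add 1).log hw1).sub (hasDerivAt_id w)).add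
      ((hasDerivAt_pow 2 w).div_const 2) |>.congr_deriv ?_
    simp only [id]
    field_simp
    ring
  have hmono : MonotoneOn f (Set.Ici 0) := by
    refine monotoneOn_of_hasDerivWithinAt_nonneg (convex_Ici 0)
      (fun w hw => (hf w hw).continuousAt.continuousWithinAt)
      (fun w hw => (hf w (interior_subset hw)).hasDerivWithinAt) fun w hw => ?_
    have : 0 ≤ w := interior_subset hw
    positivity
  have := hmono Set.self_mem_Ici hu hu
  simp only [f, add_zero, log_one, sub_zero, ne_eq, OfNat.ofNat_ne_zero, not_false_eq_true,
    zero_pow, zero_div] at this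
  linarith

lemma log_add_sub_sq_le_log_add {a t : ℝ} (ha : 0 < a) (ht : 0 ≤ t) :
    log a + t / a - (t / a) ^ 2 / 2 ≤ log (a + t) := by
  have hsplit : log (a + t) = log a + log (1 + t / a) := by
    rw [← log_mul ha.ne' (by positivity)]
    congr 1
    field_simp
  linarith [sub_sq_div_two_le_log_one_add (div_nonneg ht ha.le)]

lemma sum_range_inv_succ_sq_le (N : ℕ) : ∑ m ∈ range N, 1 / ((m : ℝ) + 1) ^ 2 ≤ π ^ 2 / 6 := by
  have h : HasSum (fun m : ℕ => 1 / ((m : ℝ) + 1) ^ 2) (π ^ 2 / 6) := by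
    simpa using (hasSum_nat_add_iff' 1).mpr hasSum_zeta_two
  exact sum_le_hasSum _ (fun m _ => by positivity) h

lemma log_factorial_add_harmonic_sub_le_sum_log {t : ℝ} (ht : 0 ≤ t) (N : ℕ) :
    log N ! + t * harmonic N - t ^ 2 / 2 * ∑ m ∈ range N, 1 / ((m : ℝ) + 1) ^ 2 ≤
      ∑ m ∈ range N, log (1 + t + m) := by
  induction N with
  | zero => simp
  | succ N ih =>
    have hterm := log_add_sub_sq_le_log_add (by positivity : (0 : ℝ) < N + 1) ht
    rw [Nat.factorial_succ, Nat.cast_mul, log_mul (by positivity) (by positivity), harmonic_succ,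
      sum_range_succ, sum_range_succ]
    push_cast at hterm ⊢
    rw [show (N : ℝ) + 1 + t = 1 + t + N by ring] at hterm
    have hsq : (t / ((N : ℝ) + 1)) ^ 2 / 2 = t ^ 2 / 2 * (1 / ((N : ℝ) + 1) ^ 2) := by
      rw [div_pow]; ring
    have hinv : t / ((N : ℝ) + 1) = t * ((N : ℝ) + 1)⁻¹ := div_eq_mul_inv _ _
    linarith

lemma logGammaSeq_one_add_le {t : ℝ} (ht : 0 ≤ t) (n : ℕ) :
    BohrMollerup.logGammaSeq (1 + t) n ≤ -t * (harmonic n - log (n + 1)) + π ^ 2 / 12 * t ^ 2 := by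
  have hsum := log_factorial_add_harmonic_sub_le_sum_log ht (n + 1)
  have hzeta := mul_le_mul_of_nonneg_left (sum_range_inv_succ_sq_le (n + 1))
    (by positivity : 0 ≤ t ^ 2 / 2)
  have hlog : log n ≤ log (n + 1) := by
    rcases eq_or_ne n 0 with rfl | hn
    · simp
    · exact log_le_log (by positivity) (by linarith)
  have hlog' := mul_le_mul_of_nonneg_left hlog (by linarith : 0 ≤ 1 + t)
  have hharm : t * harmonic n ≤ t * harmonic (n + 1) := by
    gcongr
    rw [harmonic_succ]
    exact le_add_of_nonneg_right (by positivity)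
  have hfact : log (n + 1)! = log (n + 1) + log n ! := by
    rw [Nat.factorial_succ, Nat.cast_mul, log_mul (by positivity) (by positivity)]
    push_cast
    ring
  unfold BohrMollerup.logGammaSeq
  linarith

theorem log_Gamma_one_add_le {t : ℝ} (ht : 0 ≤ t) :
    log (Gamma (1 + t)) ≤ -eulerMascheroniConstant * t + π ^ 2 / 12 * t ^ 2 := by
  refine le_of_tendsto_of_tendsto' (BohrMollerup.tendsto_log_gamma (by positivity)) ?_
    (logGammaSeq_one_add_le ht)
  convert (tendsto_harmonic_sub_log_add_one.const_mul (-t)).add_const (π ^ 2 / 12 * t ^ 2) using 2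
  ring

end Real

theorem chernoff_minus_bounds (x y : ℝ) (hx : 0 < x)
    (hy : IsGreatest
      ((fun t => (x - Real.eulerMascheroniConstant) * t - Real.log (Real.Gamma (1 + t))) ''
        Set.Ioi (0:ℝ)) y) :
    3 / (2 * Real.pi ^ 2) * x ^ 2 < y ∧ x < Real.pi * Real.sqrt (2 * y / 3) := by
  -- `t₀` maximizes `x * t - π ^ 2 / 12 * t ^ 2`.
  set t₀ := 6 * x / π ^ 2 with ht₀
  have ht₀_pos : 0 < t₀ := by positivity
  have hy_ge : 3 / π ^ 2 * x ^ 2 ≤ y := calc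
    3 / π ^ 2 * x ^ 2 = x * t₀ - π ^ 2 / 12 * t₀ ^ 2 := by rw [ht₀]; field_simp; ring
    _ ≤ (x - eulerMascheroniConstant) * t₀ - log (Gamma (1 + t₀)) := by
      linarith [log_Gamma_one_add_le ht₀_pos.le]
    _ ≤ y := hy.2 ⟨t₀, ht₀_pos, rfl⟩
  have hlt : 3 / (2 * π ^ 2) * x ^ 2 < y := by
    refine lt_of_lt_of_le ?_ hy_ge
    have : 3 / (2 * π ^ 2) < 3 / π ^ 2 := by gcongr; linarith [pow_pos pi_pos 2]
    gcongr
  refine ⟨hlt, ?_⟩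
  rw [← div_lt_iff₀' pi_pos, lt_sqrt (by positivity), div_pow]
  calc x ^ 2 / π ^ 2 = 2 / 3 * (3 / (2 * π ^ 2) * x ^ 2) := by field_simp
    _ < 2 / 3 * y := by gcongr
    _ = 2 * y / 3 := by ring
end
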